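/- Let ψ₁ = (φ₁, υ₁) and ψ₂ = (φ₂, υ₂) be solution pairs to a hybrid system H = (C, f, D, g) with ψ₁ compact, and suppose that (φ₂(0,0), υ₂(0,0)) ∈ C whenever both I_{ψ₁}^J := {t : (t,J) ∈ dom ψ₁} and I_{ψ₂}^0 := {t : (t,0) ∈ dom ψ₂} have nonempty interior, where (T,J) = max dom ψ₁. Then the concatenation ψ = (φ, υ) = ψ₁|ψ₂ satisfies: for each j ∈ ℕ such that I^j_ψ := {t : (t,j) ∈ dom ψ} has nonempty interior, (φ(t,j), υ(t,j)) ∈ C for all t in the interior of I^j_ψ. -/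

import Mathlib

open MeasureTheory Set

noncomputable section

/-- State/input space: `ℝ^k` with the Euclidean norm. -/
abbrev Vec (k : ℕ) : Type := EuclideanSpace ℝ (Fin k)

/-- A set `E ⊆ ℝ × ℕ` is a compact hybrid time domain if
`E = ⋃_{j=0}^{J} ([t_j, t_{j+1}] × {j})` for some `J ∈ ℕ` and a finite nondecreasing
sequence `0 = t_0 ≤ t_1 ≤ ... ≤ t_{J+1}`. -/
def IsCompactHTD (E : Set (ℝ × ℕ)) : Prop :=
  ∃ (J : ℕ) (t : ℕ → ℝ), t 0 = 0 ∧ (∀ i, i ≤ J → t i ≤ t (i + 1)) ∧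
    E = ⋃ j ∈ Finset.range (J + 1), Set.Icc (t j) (t (j + 1)) ×ˢ ({j} : Set ℕ)

/-- A hybrid time domain is the union of a nondecreasing sequence of compact
hybrid time domains. -/
def IsHTD (E : Set (ℝ × ℕ)) : Prop :=
  ∃ F : ℕ → Set (ℝ × ℕ), (∀ k, IsCompactHTD (F k)) ∧ Monotone F ∧ E = ⋃ k, F k

/-- The time slice `I^j = {t : (t,j) ∈ E}`. -/
def Slice (E : Set (ℝ × ℕ)) (j : ℕ) : Set ℝ := {t | (t, j) ∈ E}

/-- `(T,J) = max E` for a (compact) hybrid time domain `E`. -/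
def IsMaxOf (E : Set (ℝ × ℕ)) (T : ℝ) (J : ℕ) : Prop :=
  (T, J) ∈ E ∧ ∀ p ∈ E, p.1 ≤ T ∧ p.2 ≤ J

/-- `s` is Lebesgue measurable on `S`: preimages (within `S`) of open sets are
Lebesgue measurable subsets of `ℝ`. -/
def LebesgueMeasurableOn {k : ℕ} (s : ℝ → Vec k) (S : Set ℝ) : Prop :=
  ∀ U : Set (Vec k), IsOpen U → NullMeasurableSet {t | t ∈ S ∧ s t ∈ U} volume

/-- `s` is locally essentially bounded on `S`. -/
def LocallyEssBddOn {k : ℕ} (s : ℝ → Vec k) (S : Set ℝ) : Prop :=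
  ∀ r ∈ S, ∃ U : Set ℝ, IsOpen U ∧ r ∈ U ∧ ∃ c : ℝ, 0 ≤ c ∧
    ∀ᵐ t ∂(volume.restrict (U ∩ S)), ‖s t‖ ≤ c

/-- `s` is absolutely continuous on `[a,b]`: for each `ε > 0` there is `δ > 0` such
that every countable collection of disjoint subintervals of `[a,b]` of total length
at most `δ` has total variation of `s` at most `ε`. -/
def AbsContOn {k : ℕ} (s : ℝ → Vec k) (a b : ℝ) : Prop :=
  ∀ ε : ℝ, 0 < ε → ∃ δ : ℝ, 0 < δ ∧ ∀ I : ℕ → ℝ × ℝ,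
    (∀ i, a ≤ (I i).1 ∧ (I i).1 ≤ (I i).2 ∧ (I i).2 ≤ b) →
    (∀ i i', i ≠ i' → Disjoint (Set.Ioo (I i).1 (I i).2) (Set.Ioo (I i').1 (I i').2)) →
    (∑' i, ((I i).2 - (I i).1)) ≤ δ →
    (∑' i, ‖s (I i).2 - s (I i).1‖) ≤ ε

/-- `s` is locally absolutely continuous on `S`: absolutely continuous on every
compact subinterval of `S`. -/
def LocAbsContOn {k : ℕ} (s : ℝ → Vec k) (S : Set ℝ) : Prop :=
  ∀ a b : ℝ, a ≤ b → Set.Icc a b ⊆ S → AbsContOn s a b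

/-- `s` is locally bounded on `S`. -/
def LocallyBoundedOn {k : ℕ} (s : ℝ → Vec k) (S : Set ℝ) : Prop :=
  ∀ t₀ ∈ S, ∃ A ∈ nhds t₀, ∃ M : ℝ, 0 < M ∧ ∀ t ∈ A ∩ S, ‖s t‖ ≤ M

/-- A hybrid input: a function on a hybrid time domain `E` that is Lebesgue measurable
and locally essentially bounded on each time slice. -/
def IsHybridInput {m : ℕ} (υ : ℝ → ℕ → Vec m) (E : Set (ℝ × ℕ)) : Prop :=
  IsHTD E ∧ ∀ j : ℕ,
    LebesgueMeasurableOn (fun t => υ t j) (Slice E j) ∧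
    LocallyEssBddOn (fun t => υ t j) (Slice E j)

/-- A hybrid arc: a function on a hybrid time domain `E` that is locally absolutely
continuous on each time slice. -/
def IsHybridArc {n : ℕ} (φ : ℝ → ℕ → Vec n) (E : Set (ℝ × ℕ)) : Prop :=
  IsHTD E ∧ ∀ j : ℕ, LocAbsContOn (fun t => φ t j) (Slice E j)

/-- A hybrid system `H = (C, f, D, g)`. -/
structure HybridSystem (n m : ℕ) where
  C : Set (Vec n × Vec m)
  f : Vec n × Vec m → Vec n
  D : Set (Vec n × Vec m)
  g : Vec n × Vec m → Vec n

/-- `(φ, υ)` with common domain `E` is a solution pair to `H`. -/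
def IsSolutionPair {n m : ℕ} (H : HybridSystem n m)
    (φ : ℝ → ℕ → Vec n) (υ : ℝ → ℕ → Vec m) (E : Set (ℝ × ℕ)) : Prop :=
  IsHybridArc φ E ∧ IsHybridInput υ E ∧
  (φ 0 0, υ 0 0) ∈ closure H.C ∪ H.D ∧
  (∀ j : ℕ, (interior (Slice E j)).Nonempty →
    (∀ t ∈ interior (Slice E j), (φ t j, υ t j) ∈ H.C) ∧
    (∀ᵐ t ∂(volume.restrict (Slice E j)),
      HasDerivWithinAt (fun s => φ s j) (H.f (φ t j, υ t j)) (Slice E j) t)) ∧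
  (∀ p : ℝ × ℕ, p ∈ E → (p.1, p.2 + 1) ∈ E →
    (φ p.1 p.2, υ p.1 p.2) ∈ H.D ∧ φ p.1 (p.2 + 1) = H.g (φ p.1 p.2, υ p.1 p.2))

/-- Backward-in-time jump map `g^bw(x,u) = {z : x = g(z,u), (z,u) ∈ D}`. -/
def gbw {n m : ℕ} (H : HybridSystem n m) (x : Vec n) (u : Vec m) : Set (Vec n) :=
  {z | x = H.g (z, u) ∧ (z, u) ∈ H.D}

/-- Backward-in-time jump set `D^bw`. -/
def Dbw {n m : ℕ} (H : HybridSystem n m) : Set (Vec n × Vec m) :=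
  {p | ∃ z : Vec n, p.1 = H.g (z, p.2) ∧ (z, p.2) ∈ H.D}

/-- `(φ, υ)` with common domain `E` is a solution pair to the backward-in-time
system `H^bw = (C, -f, D^bw, g^bw)` of `H` (the jump inclusion is set-valued). -/
def IsBwSolutionPair {n m : ℕ} (H : HybridSystem n m)
    (φ : ℝ → ℕ → Vec n) (υ : ℝ → ℕ → Vec m) (E : Set (ℝ × ℕ)) : Prop :=
  IsHybridArc φ E ∧ IsHybridInput υ E ∧
  (φ 0 0, υ 0 0) ∈ closure H.C ∪ Dbw H ∧
  (∀ j : ℕ, (interior (Slice E j)).Nonempty →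
    (∀ t ∈ interior (Slice E j), (φ t j, υ t j) ∈ H.C) ∧
    (∀ᵐ t ∂(volume.restrict (Slice E j)),
      HasDerivWithinAt (fun s => φ s j) (-(H.f (φ t j, υ t j))) (Slice E j) t)) ∧
  (∀ p : ℝ × ℕ, p ∈ E → (p.1, p.2 + 1) ∈ E →
    (φ p.1 p.2, υ p.1 p.2) ∈ Dbw H ∧ φ p.1 (p.2 + 1) ∈ gbw H (φ p.1 p.2) (υ p.1 p.2))

/-- Minkowski sum `E + {(T,J)}`. -/
def Shift (E : Set (ℝ × ℕ)) (T : ℝ) (J : ℕ) : Set (ℝ × ℕ) :=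
  {p | ∃ q ∈ E, p = (q.1 + T, q.2 + J)}

/-- `ψ` with domain `E` is the concatenation `ψ₁|ψ₂`, where `(T,J) = max E₁`. -/
def IsConcat {α : Type*} (T : ℝ) (J : ℕ)
    (ψ₁ : ℝ → ℕ → α) (E₁ : Set (ℝ × ℕ))
    (ψ₂ : ℝ → ℕ → α) (E₂ : Set (ℝ × ℕ))
    (ψ : ℝ → ℕ → α) (E : Set (ℝ × ℕ)) : Prop :=
  E = E₁ ∪ Shift E₂ T J ∧
  (∀ p ∈ E₁, p ≠ (T, J) → ψ p.1 p.2 = ψ₁ p.1 p.2) ∧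
  (∀ p ∈ Shift E₂ T J, ψ p.1 p.2 = ψ₂ (p.1 - T) (p.2 - J))

/-- Minkowski difference `{(T,J)} − E`. -/
def RevDom (E : Set (ℝ × ℕ)) (T : ℝ) (J : ℕ) : Set (ℝ × ℕ) :=
  {p | ∃ q ∈ E, p = (T - q.1, J - q.2)}

/-- `(φ', υ')` with domain `E'` is the reversal of the compact pair `(φ, υ)` with
domain `E` and `(T,J) = max E`; `C` is the flow set used in the closure condition
on `υ'(0,0)`. -/
def IsReversal {n m : ℕ} (C : Set (Vec n × Vec m)) (T : ℝ) (J : ℕ)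
    (φ : ℝ → ℕ → Vec n) (υ : ℝ → ℕ → Vec m) (E : Set (ℝ × ℕ))
    (φ' : ℝ → ℕ → Vec n) (υ' : ℝ → ℕ → Vec m) (E' : Set (ℝ × ℕ)) : Prop :=
  E' = RevDom E T J ∧
  (∀ p ∈ E', φ' p.1 p.2 = φ (T - p.1) (J - p.2)) ∧
  (∀ j : ℕ, ∀ t ∈ interior (Slice E' j), υ' t j = υ (T - t) (J - j)) ∧
  ((interior (Slice E' 0)).Nonempty → (φ' 0 0, υ' 0 0) ∈ closure C) ∧
  (∀ p : ℝ × ℕ, p ∈ E' → (p.1, p.2 + 1) ∈ E' → υ' p.1 p.2 = υ (T - p.1) (J - (p.2 + 1)))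

/-- Lipschitz flow assumption with constants `Kx, Ku`. -/
def LipschitzFlow {n m : ℕ} (H : HybridSystem n m) (Kx Ku : ℝ) : Prop :=
  0 < Kx ∧ 0 < Ku ∧
  ∀ (x₀ x₁ : Vec n) (u₀ u₁ : Vec m),
    (x₀, u₀) ∈ H.C → (x₁, u₀) ∈ H.C → (x₀, u₁) ∈ H.C →
    ‖H.f (x₀, u₀) - H.f (x₁, u₀)‖ ≤ Kx * ‖x₀ - x₁‖ ∧
    ‖H.f (x₀, u₀) - H.f (x₀, u₁)‖ ≤ Ku * ‖u₀ - u₁‖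

/-- Linearly bounded jump map assumption with constants `Kx, Ku`. -/
def LinearBoundedJump {n m : ℕ} (H : HybridSystem n m) (Kx Ku : ℝ) : Prop :=
  0 < Kx ∧ 0 < Ku ∧
  ∀ (x₀ x₁ : Vec n) (u₀ u₁ : Vec m), (x₀, u₀) ∈ H.D → (x₁, u₁) ∈ H.D →
    ‖H.g (x₀, u₀) - H.g (x₁, u₁)‖ ≤ Kx * ‖x₀ - x₁‖ + Ku * ‖u₀ - u₁‖

/-- `φ` with domain `F ⊆ E'` is a reconstructed solution with input `υ'` (defined on
`E'`) and initial condition `x0`: it starts at `x0`, flows according to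
`f(·, υ')` on each nondegenerate slice, and jumps according to `g(·, υ')`. -/
def IsReconSolution {n m : ℕ} (H : HybridSystem n m)
    (υ' : ℝ → ℕ → Vec m) (E' : Set (ℝ × ℕ)) (x0 : Vec n)
    (φ : ℝ → ℕ → Vec n) (F : Set (ℝ × ℕ)) : Prop :=
  F ⊆ E' ∧ (0, 0) ∈ F ∧ φ 0 0 = x0 ∧ IsHTD F ∧
  (∀ j : ℕ, LocAbsContOn (fun t => φ t j) (Slice F j)) ∧
  (∀ j : ℕ, (interior (Slice F j)).Nonempty →
    ∀ᵐ t ∂(volume.restrict (Slice F j)),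
      HasDerivWithinAt (fun s => φ s j) (H.f (φ t j, υ' t j)) (Slice F j) t) ∧
  (∀ p : ℝ × ℕ, p ∈ F → (p.1, p.2 + 1) ∈ F →
    φ p.1 (p.2 + 1) = H.g (φ p.1 p.2, υ' p.1 p.2))

/-- A maximal reconstructed solution: one admitting no proper extension. -/
def IsMaximalRecon {n m : ℕ} (H : HybridSystem n m)
    (υ' : ℝ → ℕ → Vec m) (E' : Set (ℝ × ℕ)) (x0 : Vec n)
    (φ : ℝ → ℕ → Vec n) (F : Set (ℝ × ℕ)) : Prop :=
  IsReconSolution H υ' E' x0 φ F ∧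
  ∀ (φ₂ : ℝ → ℕ → Vec n) (F₂ : Set (ℝ × ℕ)),
    IsReconSolution H υ' E' x0 φ₂ F₂ → F ⊆ F₂ →
    (∀ p ∈ F, φ₂ p.1 p.2 = φ p.1 p.2) → F₂ = F

/-! The `J`-th slice of `E₁ ∪ (E₂ + (T,J))` is `Slice E₁ J ∪ (Slice E₂ 0 + T)`, two sets meeting at
most at `T`; the other slices are slices of `E₁` or translates of slices of `E₂`. Away from `T`, an
interior point of the `J`-th slice is interior to one of the two pieces, where the flow condition of
`ψ₁` or `ψ₂` applies; an interior point at `T` forces both pieces to have nonempty interior, which is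
exactly when the junction hypothesis puts `ψ(T,J) = ψ₂(0,0)` in `C`. -/

section OrderTopology

variable {α : Type*} [TopologicalSpace α] [LinearOrder α] [OrderTopology α] {A B : Set α} {a t : α}

lemma mem_interior_left_of_mem_interior_union (hB : B ⊆ Ici a) (ht : t ∈ interior (A ∪ B))
    (hta : t < a) : t ∈ interior A :=
  interior_union_inter_interior_compl_right_subset
    ⟨ht, interior_maximal (fun _ hs hsB => not_le.2 hs (hB hsB)) isOpen_Iio hta⟩

lemma mem_interior_right_of_mem_interior_union (hA : A ⊆ Iic a) (ht : t ∈ interior (A ∪ B))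
    (hat : a < t) : t ∈ interior B :=
  interior_union_inter_interior_compl_left_subset
    ⟨ht, interior_maximal (fun _ hs hsA => not_le.2 hs (hA hsA)) isOpen_Ioi hat⟩

variable [DenselyOrdered α]

lemma interior_nonempty_left_of_mem_interior_union [NoMinOrder α] (hB : B ⊆ Ici a)
    (ha : a ∈ interior (A ∪ B)) : (interior A).Nonempty := by
  obtain ⟨t, ht, hta⟩ := mem_closure_iff_nhds.1 ((closure_Iio a).ge le_rfl) _
    (isOpen_interior.mem_nhds ha)
  exact ⟨t, mem_interior_left_of_mem_interior_union hB ht hta⟩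

lemma interior_nonempty_right_of_mem_interior_union [NoMaxOrder α] (hA : A ⊆ Iic a)
    (ha : a ∈ interior (A ∪ B)) : (interior B).Nonempty := by
  obtain ⟨t, ht, hat⟩ := mem_closure_iff_nhds.1 ((closure_Ioi a).ge le_rfl) _
    (isOpen_interior.mem_nhds ha)
  exact ⟨t, mem_interior_right_of_mem_interior_union hA ht hat⟩

end OrderTopology

lemma interior_preimage_sub_right {G : Type*} [TopologicalSpace G] [AddGroup G]
    [IsTopologicalAddGroup G] (S : Set G) (a : G) :
    interior ((· - a) ⁻¹' S) = (· - a) ⁻¹' interior S :=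
  ((Homeomorph.subRight a).preimage_interior S).symm

lemma IsCompactHTD.zero_mem {E : Set (ℝ × ℕ)} (h : IsCompactHTD E) : ((0 : ℝ), 0) ∈ E := by
  obtain ⟨J, t, ht0, hmono, rfl⟩ := h
  exact mem_iUnion₂.2 ⟨0, by simp, ⟨ht0.le, ht0 ▸ hmono 0 J.zero_le⟩, rfl⟩

lemma IsCompactHTD.fst_nonneg {E : Set (ℝ × ℕ)} (h : IsCompactHTD E) : ∀ p ∈ E, 0 ≤ p.1 := by
  obtain ⟨J, t, ht0, hmono, rfl⟩ := h
  have ht_nonneg : ∀ i ≤ J + 1, 0 ≤ t i := by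
    intro i hi
    induction i with
    | zero => exact ht0.ge
    | succ k ih => exact (ih (by omega)).trans (hmono k (by omega))
  intro p hp
  obtain ⟨j, hj, hp₁, -⟩ := mem_iUnion₂.1 hp
  exact (ht_nonneg j (by simp at hj; omega)).trans hp₁.1

lemma IsHTD.zero_mem {E : Set (ℝ × ℕ)} (h : IsHTD E) : ((0 : ℝ), 0) ∈ E := by
  obtain ⟨F, hF, -, rfl⟩ := h
  exact mem_iUnion.2 ⟨0, (hF 0).zero_mem⟩

lemma IsHTD.fst_nonneg {E : Set (ℝ × ℕ)} (h : IsHTD E) : ∀ p ∈ E, 0 ≤ p.1 := by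
  obtain ⟨F, hF, -, rfl⟩ := h
  intro p hp
  obtain ⟨k, hk⟩ := mem_iUnion.1 hp
  exact (hF k).fst_nonneg p hk

lemma slice_shift_of_lt (E : Set (ℝ × ℕ)) (T : ℝ) {J j : ℕ} (hj : j < J) :
    Slice (Shift E T J) j = ∅ :=
  eq_empty_of_forall_notMem fun _ ⟨q, _, hq⟩ => by
    have := congrArg Prod.snd hq
    simp only at this
    omega

lemma slice_shift_add (E : Set (ℝ × ℕ)) (T : ℝ) (J i : ℕ) :
    Slice (Shift E T J) (i + J) = (· - T) ⁻¹' Slice E i := by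
  ext s
  constructor
  · rintro ⟨q, hq, hsq⟩
    obtain ⟨rfl, hi⟩ := Prod.mk.inj hsq
    obtain rfl : i = q.2 := by omega
    simpa [Slice] using hq
  · intro hs
    exact ⟨(s - T, i), hs, by simp⟩

lemma slice_shift_self (E : Set (ℝ × ℕ)) (T : ℝ) (J : ℕ) :
    Slice (Shift E T J) J = (· - T) ⁻¹' Slice E 0 := by
  simpa using slice_shift_add E T J 0

lemma IsMaxOf.slice_subset_Iic {E : Set (ℝ × ℕ)} {T : ℝ} {J : ℕ} (h : IsMaxOf E T J) (j : ℕ) :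
    Slice E j ⊆ Iic T :=
  fun _ hs => (h.2 _ hs).1

lemma IsMaxOf.slice_of_lt {E : Set (ℝ × ℕ)} {T : ℝ} {J j : ℕ} (h : IsMaxOf E T J) (hj : J < j) :
    Slice E j = ∅ :=
  eq_empty_of_forall_notMem fun _ hs => hj.not_ge (h.2 _ hs).2

namespace IsConcat

variable {α : Type*} {T : ℝ} {J : ℕ} {ψ₁ ψ₂ ψ : ℝ → ℕ → α} {E₁ E₂ E : Set (ℝ × ℕ)}

lemma slice_eq (h : IsConcat T J ψ₁ E₁ ψ₂ E₂ ψ E) (j : ℕ) :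
    Slice E j = Slice E₁ j ∪ Slice (Shift E₂ T J) j := by
  rw [h.1]
  rfl

lemma apply_of_mem_shift (h : IsConcat T J ψ₁ E₁ ψ₂ E₂ ψ E) {s : ℝ} {i : ℕ}
    (hs : s - T ∈ Slice E₂ i) : ψ s (i + J) = ψ₂ (s - T) i := by
  simpa using h.2.2 (s, i + J) ⟨(s - T, i), hs, by simp⟩

end IsConcat

section Concatenation

variable {n m : ℕ} {H : HybridSystem n m} {φ₁ φ₂ φ : ℝ → ℕ → Vec n} {υ₁ υ₂ υ : ℝ → ℕ → Vec m}
  {E₁ E₂ E : Set (ℝ × ℕ)} {T : ℝ} {J : ℕ}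

lemma IsSolutionPair.mem_flowSet (h : IsSolutionPair H φ υ E) {t : ℝ} {j : ℕ}
    (ht : t ∈ interior (Slice E j)) : (φ t j, υ t j) ∈ H.C :=
  (h.2.2.2.1 j ⟨t, ht⟩).1 t ht

lemma concat_mem_flowSet_of_mem_interior_left (h₁ : IsSolutionPair H φ₁ υ₁ E₁)
    (hφ : IsConcat T J φ₁ E₁ φ₂ E₂ φ E) (hυ : IsConcat T J υ₁ E₁ υ₂ E₂ υ E) {t : ℝ} {j : ℕ}
    (ht : t ∈ interior (Slice E₁ j)) (hne : (t, j) ≠ (T, J)) : (φ t j, υ t j) ∈ H.C := by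
  have hmem : (t, j) ∈ E₁ := interior_subset (s := Slice E₁ j) ht
  rw [hφ.2.1 (t, j) hmem hne, hυ.2.1 (t, j) hmem hne]
  exact h₁.mem_flowSet ht

lemma concat_mem_flowSet_of_mem_interior_right (h₂ : IsSolutionPair H φ₂ υ₂ E₂)
    (hφ : IsConcat T J φ₁ E₁ φ₂ E₂ φ E) (hυ : IsConcat T J υ₁ E₁ υ₂ E₂ υ E) {t : ℝ} {i : ℕ}
    (ht : t - T ∈ interior (Slice E₂ i)) : (φ t (i + J), υ t (i + J)) ∈ H.C := by
  rw [hφ.apply_of_mem_shift (interior_subset ht), hυ.apply_of_mem_shift (interior_subset ht)]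
  exact h₂.mem_flowSet ht

lemma concat_mem_flowSet_of_mem_interior_junction_slice (h₁ : IsSolutionPair H φ₁ υ₁ E₁)
    (h₂ : IsSolutionPair H φ₂ υ₂ E₂) (hmax : IsMaxOf E₁ T J)
    (hC : (interior (Slice E₁ J)).Nonempty → (interior (Slice E₂ 0)).Nonempty →
      (φ₂ 0 0, υ₂ 0 0) ∈ H.C)
    (hφ : IsConcat T J φ₁ E₁ φ₂ E₂ φ E) (hυ : IsConcat T J υ₁ E₁ υ₂ E₂ υ E) {t : ℝ}
    (ht : t ∈ interior (Slice E J)) : (φ t J, υ t J) ∈ H.C := by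
  have hA : Slice E₁ J ⊆ Iic T := hmax.slice_subset_Iic J
  have hB : Slice (Shift E₂ T J) J ⊆ Ici T := fun s hs => by
    rw [slice_shift_self] at hs
    simpa using h₂.1.1.fst_nonneg _ hs
  rw [hφ.slice_eq] at ht
  rcases lt_trichotomy t T with htT | rfl | hTt
  · exact concat_mem_flowSet_of_mem_interior_left h₁ hφ hυ
      (mem_interior_left_of_mem_interior_union hB ht htT) (by simp [htT.ne])
  · have hI₂ := interior_nonempty_right_of_mem_interior_union hA ht
    rw [slice_shift_self, interior_preimage_sub_right] at hI₂
    obtain ⟨s, hs⟩ := hI₂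
    have h₀ : t - t ∈ Slice E₂ 0 := by simpa [Slice] using h₂.1.1.zero_mem
    have hφt : φ t J = φ₂ 0 0 := by simpa using hφ.apply_of_mem_shift h₀
    have hυt : υ t J = υ₂ 0 0 := by simpa using hυ.apply_of_mem_shift h₀
    rw [hφt, hυt]
    exact hC (interior_nonempty_left_of_mem_interior_union hB ht) ⟨s - t, hs⟩
  · have ht₂ := mem_interior_right_of_mem_interior_union hA ht hTt
    rw [slice_shift_self, interior_preimage_sub_right] at ht₂
    simpa using concat_mem_flowSet_of_mem_interior_right h₂ hφ hυ (i := 0) ht₂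

end Concatenation

theorem concat_flow_set_condition_general {n m : ℕ} (H : HybridSystem n m)
    (φ₁ : ℝ → ℕ → Vec n) (υ₁ : ℝ → ℕ → Vec m) (E₁ : Set (ℝ × ℕ))
    (φ₂ : ℝ → ℕ → Vec n) (υ₂ : ℝ → ℕ → Vec m) (E₂ : Set (ℝ × ℕ))
    (φ : ℝ → ℕ → Vec n) (υ : ℝ → ℕ → Vec m) (E : Set (ℝ × ℕ))
    (T : ℝ) (J : ℕ)
    (h₁ : IsSolutionPair H φ₁ υ₁ E₁)
    (h₂ : IsSolutionPair H φ₂ υ₂ E₂)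
    (hmax : IsMaxOf E₁ T J)
    (hC : (interior (Slice E₁ J)).Nonempty → (interior (Slice E₂ 0)).Nonempty →
      (φ₂ 0 0, υ₂ 0 0) ∈ H.C)
    (hφ : IsConcat T J φ₁ E₁ φ₂ E₂ φ E)
    (hυ : IsConcat T J υ₁ E₁ υ₂ E₂ υ E) :
    ∀ j : ℕ, (interior (Slice E j)).Nonempty →
      ∀ t ∈ interior (Slice E j), (φ t j, υ t j) ∈ H.C := by
  intro j _ t ht
  rcases lt_trichotomy j J with hj | rfl | hj
  · rw [hφ.slice_eq, slice_shift_of_lt E₂ T hj, union_empty] at ht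
    exact concat_mem_flowSet_of_mem_interior_left h₁ hφ hυ ht (by simp [hj.ne])
  · exact concat_mem_flowSet_of_mem_interior_junction_slice h₁ h₂ hmax hC hφ hυ ht
  · obtain ⟨i, rfl⟩ : ∃ i, j = i + J := ⟨j - J, by omega⟩
    rw [hφ.slice_eq, hmax.slice_of_lt hj, empty_union, slice_shift_add,
      interior_preimage_sub_right] at ht
    exact concat_mem_flowSet_of_mem_interior_right h₂ hφ hυ ht

/-- Lemma 10: if `ψ₁` and `ψ₂` are solution pairs to `H`, `ψ₁` compact, and
`(φ₂(0,0), υ₂(0,0)) ∈ C` whenever `I^J_{ψ₁}` and `I^0_{ψ₂}` both have nonempty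
interior, then the concatenation `ψ = (φ, υ) = ψ₁|ψ₂` satisfies the flow-set
condition: for each `j` with `I^j_ψ` of nonempty interior, `(φ(t,j), υ(t,j)) ∈ C`
for all `t` in the interior of `I^j_ψ`. -/
theorem concat_flow_set_condition {n m : ℕ} (H : HybridSystem n m)
    (φ₁ : ℝ → ℕ → Vec n) (υ₁ : ℝ → ℕ → Vec m) (E₁ : Set (ℝ × ℕ))
    (φ₂ : ℝ → ℕ → Vec n) (υ₂ : ℝ → ℕ → Vec m) (E₂ : Set (ℝ × ℕ))
    (φ : ℝ → ℕ → Vec n) (υ : ℝ → ℕ → Vec m) (E : Set (ℝ × ℕ))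
    (T : ℝ) (J : ℕ)
    (h₁ : IsSolutionPair H φ₁ υ₁ E₁)
    (h₂ : IsSolutionPair H φ₂ υ₂ E₂)
    (hcpt : IsCompactHTD E₁)
    (hmax : IsMaxOf E₁ T J)
    (hC : (interior (Slice E₁ J)).Nonempty → (interior (Slice E₂ 0)).Nonempty →
      (φ₂ 0 0, υ₂ 0 0) ∈ H.C)
    (hφ : IsConcat T J φ₁ E₁ φ₂ E₂ φ E)
    (hυ : IsConcat T J υ₁ E₁ υ₂ E₂ υ E) :
    ∀ j : ℕ, (interior (Slice E j)).Nonempty →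
      ∀ t ∈ interior (Slice E j), (φ t j, υ t j) ∈ H.C :=
  concat_flow_set_condition_general H φ₁ υ₁ E₁ φ₂ υ₂ E₂ φ υ E T J h₁ h₂ hmax hC hφ hυ
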